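/- Let n ≥ 3 and define u(x) = ln|ln|x|| and f(x) = (n-2)/(|x|² ln|x|) − 1/(|x|² ln²|x|) on the punctured ball B_{e^{-1}} \ {0} in ℝⁿ. Then Δu = f on B_{e^{-1}} \ {0}. -/

import Mathlib

/-!
The function is radial: `log |log ‖y‖| = φ (‖y‖ ^ 2)` with `φ s = log (log s / 2)`. For any
radial function `Δ (φ ∘ ‖·‖²) = 2 n φ'(t) + 4 t φ''(t)` at `t = ‖x‖²`, and here
`φ' s = 1 / (s log s)`, `φ'' s = -(log s + 1) / (s log s)²`; substituting `log t = 2 log ‖x‖`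
gives the formula.
-/

open MeasureTheory

/-- The Laplacian: sum of second partial derivatives. -/
noncomputable def lap {n : ℕ} (u : EuclideanSpace ℝ (Fin n) → ℝ)
    (x : EuclideanSpace ℝ (Fin n)) : ℝ :=
  ∑ i : Fin n, fderiv ℝ (fun y => fderiv ℝ u y (EuclideanSpace.single i 1)) x
    (EuclideanSpace.single i 1)

open Filter Topology

section Radial

variable {n : ℕ} {φ : ℝ → ℝ}

theorem fderiv_comp_norm_sq_single {y : EuclideanSpace ℝ (Fin n)}
    (hφ : DifferentiableAt ℝ φ (‖y‖ ^ 2)) (i : Fin n) :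
    fderiv ℝ (fun z => φ (‖z‖ ^ 2)) y (EuclideanSpace.single i 1)
      = deriv φ (‖y‖ ^ 2) * (2 * y i) := by
  have h : HasFDerivAt (fun z => φ (‖z‖ ^ 2)) _ y :=
    hφ.hasDerivAt.comp_hasFDerivAt y (hasStrictFDerivAt_norm_sq y).hasFDerivAt
  rw [h.fderiv]
  simp [EuclideanSpace.inner_single_right]

theorem lap_comp_norm_sq {x : EuclideanSpace ℝ (Fin n)} {φ'' : ℝ}
    (hφ : ∀ᶠ s in 𝓝 (‖x‖ ^ 2), DifferentiableAt ℝ φ s)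
    (hφ' : HasDerivAt (deriv φ) φ'' (‖x‖ ^ 2)) :
    lap (fun y => φ (‖y‖ ^ 2)) x = 2 * n * deriv φ (‖x‖ ^ 2) + 4 * ‖x‖ ^ 2 * φ'' := by
  have hnear : ∀ᶠ y in 𝓝 x, DifferentiableAt ℝ φ (‖y‖ ^ 2) :=
    (continuous_norm.pow 2).continuousAt.eventually hφ
  have hsecond (i : Fin n) :
      fderiv ℝ (fun y => fderiv ℝ (fun z => φ (‖z‖ ^ 2)) y (EuclideanSpace.single i 1)) x
          (EuclideanSpace.single i 1)
        = 2 * deriv φ (‖x‖ ^ 2) + 4 * φ'' * x i ^ 2 := by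
    have hfirst : (fun y => fderiv ℝ (fun z => φ (‖z‖ ^ 2)) y (EuclideanSpace.single i 1))
        =ᶠ[𝓝 x] fun y => deriv φ (‖y‖ ^ 2) * (2 * y i) :=
      hnear.mono fun y hy => fderiv_comp_norm_sq_single hy i
    have hcoord : HasFDerivAt (fun y : EuclideanSpace ℝ (Fin n) => 2 * y i)
        ((2 : ℝ) • EuclideanSpace.proj i) x :=
      (EuclideanSpace.proj (𝕜 := ℝ) i).hasFDerivAt.const_mul (2 : ℝ)
    have hradial := hφ'.comp_hasFDerivAt x (hasStrictFDerivAt_norm_sq x).hasFDerivAt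
    have h : HasFDerivAt (𝕜 := ℝ) (fun y => deriv φ (‖y‖ ^ 2) * (2 * y i)) _ x :=
      hradial.mul hcoord
    rw [hfirst.fderiv_eq, h.fderiv]
    simp [EuclideanSpace.inner_single_right]
    ring
  rw [lap, Finset.sum_congr rfl fun i _ => hsecond i]
  simp [Finset.sum_add_distrib, ← Finset.mul_sum, ← EuclideanSpace.real_norm_sq_eq]
  ring

end Radial

open Real

theorem hasDerivAt_log_log_div_two {s : ℝ} (hs : s ≠ 0) (hlog : log s ≠ 0) :
    HasDerivAt (fun u => log (log u / 2)) (s * log s)⁻¹ s := by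
  convert ((hasDerivAt_log hs).div_const 2).log (div_ne_zero hlog two_ne_zero) using 1
  rw [div_div_div_cancel_right₀ two_ne_zero, mul_inv, div_eq_mul_inv]

theorem hasDerivAt_inv_mul_log {t : ℝ} (ht : t ≠ 0) (hlog : log t ≠ 0) :
    HasDerivAt (fun s => (s * log s)⁻¹) (-(log t + 1) / (t * log t) ^ 2) t :=
  (hasDerivAt_mul_log ht).inv (mul_ne_zero ht hlog)

theorem log_abs_log_norm_eq {E : Type*} [Norm E] (y : E) :
    log |log ‖y‖| = log (log (‖y‖ ^ 2) / 2) := by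
  rw [log_abs, log_pow]
  congr 1
  push_cast
  ring

theorem stmt_0_general (n : ℕ) :
    ∀ x : EuclideanSpace ℝ (Fin n), 0 < ‖x‖ → ‖x‖ < Real.exp (-1) →
      lap (fun y => Real.log |Real.log ‖y‖|) x
        = ((n : ℝ) - 2) / (‖x‖ ^ 2 * Real.log ‖x‖)
            - 1 / (‖x‖ ^ 2 * (Real.log ‖x‖) ^ 2) := by
  intro x hx0 hx1
  have hlogx : log ‖x‖ < 0 := log_neg hx0 (hx1.trans (exp_lt_one_iff.mpr (by norm_num)))
  have ht : ‖x‖ ^ 2 ≠ 0 := by positivity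
  have hlog : log (‖x‖ ^ 2) ≠ 0 := by rw [log_pow]; exact mul_ne_zero (by norm_num) hlogx.ne
  have hnear : ∀ᶠ s in 𝓝 (‖x‖ ^ 2), s ≠ 0 ∧ log s ≠ 0 :=
    (eventually_ne_nhds ht).and ((continuousAt_log ht).eventually_ne hlog)
  have hφ' : HasDerivAt (deriv fun s => log (log s / 2))
      (-(log (‖x‖ ^ 2) + 1) / (‖x‖ ^ 2 * log (‖x‖ ^ 2)) ^ 2) (‖x‖ ^ 2) :=
    (hasDerivAt_inv_mul_log ht hlog).congr_of_eventuallyEq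
      (hnear.mono fun s hs => (hasDerivAt_log_log_div_two hs.1 hs.2).deriv)
  simp only [log_abs_log_norm_eq]
  rw [lap_comp_norm_sq (hnear.mono fun s hs =>
      (hasDerivAt_log_log_div_two hs.1 hs.2).differentiableAt) hφ',
    (hasDerivAt_log_log_div_two ht hlog).deriv, log_pow]
  field_simp
  ring

theorem stmt_0 (n : ℕ) (hn : 3 ≤ n) :
    ∀ x : EuclideanSpace ℝ (Fin n), 0 < ‖x‖ → ‖x‖ < Real.exp (-1) →
      lap (fun y => Real.log |Real.log ‖y‖|) x
        = ((n : ℝ) - 2) / (‖x‖ ^ 2 * Real.log ‖x‖)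
            - 1 / (‖x‖ ^ 2 * (Real.log ‖x‖) ^ 2) :=
  stmt_0_general n
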